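/- Let λ ∈ [0,1) and α = (1+λ)/2. Let a, b, c be IFNs with aμ ≤ bμ and aν ≥ bν (i.e., a ≤ b in the dominance order). Then a∗c ≤ b∗c, and moreover (b∗c)μ − (a∗c)μ ≤ α·(bμ − aμ) and (a∗c)ν − (b∗c)ν ≥ (1−α)·(aν − bν); that is, b∗c − a∗c ≤ ((1+λ)/2)·(b − a) in the sense of intuitionistic fuzzy numbers. -/

import Mathlib

open Filter Topology

/-- Membership scalar operation of the convex combination of max-min and
maxarithmetic mean–minarithmetic mean: `x ⊛ y = λ·min(x,y) + (1-λ)·(x+y)/2`. -/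
noncomputable def starMu (lam x y : ℝ) : ℝ :=
  lam * min x y + (1 - lam) * ((x + y) / 2)

/-- Non-membership scalar operation:
`x ⊛' y = λ·max(x,y) + (1-λ)·(x+y)/2`. -/
noncomputable def starNu (lam x y : ℝ) : ℝ :=
  lam * max x y + (1 - lam) * ((x + y) / 2)

/-! Since `min` is monotone and 1-Lipschitz, `y ↦ starMu lam y z` increases at a rate between
`(1 - λ)/2` (the arithmetic-mean part alone) and `(1 + λ)/2` (the min part moving fully as well).
The identity `max x y = -min (-x) (-y)` transfers both rates to `starNu`. -/

section

variable {lam x y : ℝ}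

lemma starMu_sub_starMu (lam x y z : ℝ) :
    starMu lam y z - starMu lam x z = lam * (min y z - min x z) + (1 - lam) / 2 * (y - x) := by
  unfold starMu
  ring

lemma starNu_eq_neg_starMu_neg (lam x y : ℝ) : starNu lam x y = -starMu lam (-x) (-y) := by
  unfold starNu starMu
  rw [min_neg_neg]
  ring

lemma mul_sub_le_starMu_sub_starMu (hlam : 0 ≤ lam) (hxy : x ≤ y) (z : ℝ) :
    (1 - lam) / 2 * (y - x) ≤ starMu lam y z - starMu lam x z := by
  have hmin : 0 ≤ min y z - min x z := sub_nonneg.2 (min_le_min_right z hxy)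
  rw [starMu_sub_starMu]
  nlinarith

lemma starMu_sub_starMu_le (hlam : 0 ≤ lam) (hxy : x ≤ y) (z : ℝ) :
    starMu lam y z - starMu lam x z ≤ (1 + lam) / 2 * (y - x) := by
  have hmin : min y z - min x z ≤ y - x := by grind
  rw [starMu_sub_starMu]
  nlinarith

lemma starMu_le_starMu_left (hlam : lam ∈ Set.Icc (0 : ℝ) 1) (hxy : x ≤ y) (z : ℝ) :
    starMu lam x z ≤ starMu lam y z := by
  have hrate : 0 ≤ (1 - lam) / 2 * (y - x) :=
    mul_nonneg (by linarith [hlam.2]) (sub_nonneg.2 hxy)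
  linarith [mul_sub_le_starMu_sub_starMu hlam.1 hxy z]

lemma mul_sub_le_starNu_sub_starNu (hlam : 0 ≤ lam) (hyx : y ≤ x) (z : ℝ) :
    (1 - lam) / 2 * (x - y) ≤ starNu lam x z - starNu lam y z := by
  have := mul_sub_le_starMu_sub_starMu hlam (neg_le_neg hyx) (-z)
  rw [starNu_eq_neg_starMu_neg, starNu_eq_neg_starMu_neg]
  linarith

lemma starNu_le_starNu_left (hlam : lam ∈ Set.Icc (0 : ℝ) 1) (hyx : y ≤ x) (z : ℝ) :
    starNu lam y z ≤ starNu lam x z := by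
  rw [starNu_eq_neg_starMu_neg, starNu_eq_neg_starMu_neg, neg_le_neg_iff]
  exact starMu_le_starMu_left hlam (neg_le_neg hyx) (-z)

end

theorem star_sub_star_le (lam : ℝ) (hlam : lam ∈ Set.Ico (0 : ℝ) 1)
    (alpha : ℝ) (halpha : alpha = (1 + lam) / 2)
    (a b c : ℝ × ℝ)
    (hab : a.1 ≤ b.1 ∧ b.2 ≤ a.2) :
    (starMu lam a.1 c.1 ≤ starMu lam b.1 c.1 ∧
        starNu lam b.2 c.2 ≤ starNu lam a.2 c.2) ∧
      starMu lam b.1 c.1 - starMu lam a.1 c.1 ≤ alpha * (b.1 - a.1) ∧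
      starNu lam a.2 c.2 - starNu lam b.2 c.2 ≥ (1 - alpha) * (a.2 - b.2) := by
  have hlam' : lam ∈ Set.Icc (0 : ℝ) 1 := Set.Ico_subset_Icc_self hlam
  have hcoeff : 1 - alpha = (1 - lam) / 2 := by rw [halpha]; ring
  refine ⟨⟨starMu_le_starMu_left hlam' hab.1 c.1, starNu_le_starNu_left hlam' hab.2 c.2⟩, ?_, ?_⟩
  · rw [halpha]
    exact starMu_sub_starMu_le hlam.1 hab.1 c.1
  · rw [hcoeff]
    exact mul_sub_le_starNu_sub_starNu hlam.1 hab.2 c.2
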